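/- Let (G,S) be the Cayley graph of a torsion-free finitely generated abelian group G ≅ ℤ^m with finite symmetric generating set S. Then every polynomial growth harmonic function on (G,S) is (the restriction to ℤ^m of) a polynomial: for every d ≥ 0, H^d(G,S) ⊆ P^d(ℤ^m). -/

import Mathlib

open MvPolynomial

/-- The discrete Laplacian on the Cayley graph of an abelian group `G` with a finite
(symmetric, listed with possible repetitions, hence a multiset) generating set `S`:
`L^S f x = ∑_{s ∈ S} (f (x + s) - f x)`, counted with multiplicity. -/
def lap {G : Type} [AddCommGroup G] (S : Multiset G) (f : G → ℝ) : G → ℝ := fun x =>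
  (S.map fun s => f (x + s) - f x).sum

/-- The squared gradient `|∇f|²(x) = ∑_{s ∈ S} (f (x + s) - f x)²`, with multiplicity. -/
def gradSq {G : Type} [AddCommGroup G] (S : Multiset G) (f : G → ℝ) (x : G) : ℝ :=
  (S.map fun s => (f (x + s) - f x) ^ 2).sum

/-- The word metric `d^S(x,y)`: the least `k` such that `y - x` is a sum of `k`
elements of `S` (i.e. the combinatorial distance in the Cayley graph). -/
noncomputable def wdist {G : Type} [AddCommGroup G] (S : Multiset G) (x y : G) : ℕ :=
  sInf {k : ℕ | ∃ w : Fin k → G, (∀ i, w i ∈ S) ∧ x + ∑ i, w i = y}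

/-- The closed ball `B_R(x) = {y : d^S(x,y) ≤ R}` in the word metric. -/
def ball {G : Type} [AddCommGroup G] (S : Multiset G) (x : G) (R : ℝ) : Set G :=
  {y | (wdist S x y : ℝ) ≤ R}

/-- The finitely generated abelian group `ℤ^m ⊕ ⊕_{i=1}^l ℤ_{q i}`. -/
abbrev AbG (m l : ℕ) (q : Fin l → ℕ) : Type := (Fin m → ℤ) × (∀ i : Fin l, ZMod (q i))

/-- `H^d(G,S)`: the harmonic functions on `(G,S)` of polynomial growth of order at most `d`
(with respect to a fixed basepoint `p`). -/
noncomputable def HdSet {G : Type} [AddCommGroup G] (S : Multiset G) (p : G) (d : Real) :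
    Set (G -> Real) :=
  {u | (forall x, lap S u x = 0) /\
       exists C : Real, forall x, |u x| <= C * ((wdist S p x : Real) + 1) ^ d}

/-!
A harmonic function `u` with `|u x| ≤ C (d(p, x) + 1)^d` satisfies `∑_{B_R} u² = O(R^(2d + m))`,
since a ball of radius `R` in `ℤ^m` has `O(R^m)` points. For harmonic `v`, the Caccioppoli
inequality `∑_{B_R} |∇v|² ≤ 4|S| R⁻² ∑_{B_{2R+1}} v²` shows that each difference `Δ_[s] v` along
a generator (again harmonic) lowers this exponent by `2`, and a negative exponent forces the
function to vanish. By induction on `k`, every `k`-th difference `(Δ_[g])^[k] u` with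
`2k > 2d + m` vanishes: its differences along the generators vanish, and invariance under the
generators spreads to all of `ℤ^m`. Gregory-Newton interpolation then makes `u` a polynomial, and
restricting it to a line on which its top homogeneous part does not vanish bounds its degree
by `d`.
-/

open Finset Filter Asymptotics
open scoped fwdDiff Topology

section WordMetric

variable {G : Type} [AddCommGroup G] {S : Multiset G}

lemma neg_mem_of_map_neg_eq (hsym : S.map (fun s => -s) = S) {s : G} (hs : s ∈ S) : -s ∈ S :=
  hsym ▸ Multiset.mem_map_of_mem _ hs

lemma exists_append_word {k l : ℕ} {v : Fin k → G} {w : Fin l → G}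
    (hv : ∀ i, v i ∈ S) (hw : ∀ i, w i ∈ S) :
    ∃ u : Fin (k + l) → G, (∀ i, u i ∈ S) ∧ ∑ i, u i = ∑ i, v i + ∑ i, w i :=
  ⟨Fin.append v w, Fin.addCases (by simpa using hv) (by simpa using hw),
    by simp [Fin.sum_univ_add]⟩

lemma exists_word (hsym : S.map (fun s => -s) = S)
    (hgen : AddSubgroup.closure {s : G | s ∈ S} = ⊤) (g : G) :
    ∃ k, ∃ w : Fin k → G, (∀ i, w i ∈ S) ∧ ∑ i, w i = g := by
  induction (hgen ▸ AddSubgroup.mem_top g : g ∈ AddSubgroup.closure {s | s ∈ S})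
    using AddSubgroup.closure_induction with
  | mem s hs => exact ⟨1, fun _ => s, fun _ => hs, by simp⟩
  | zero => exact ⟨0, Fin.elim0, fun i => i.elim0, by simp⟩
  | add a b _ _ iha ihb =>
    obtain ⟨k, v, hv, rfl⟩ := iha
    obtain ⟨l, w, hw, rfl⟩ := ihb
    exact ⟨k + l, exists_append_word hv hw⟩
  | neg a _ iha =>
    obtain ⟨k, w, hw, rfl⟩ := iha
    exact ⟨k, fun i => -w i, fun i => neg_mem_of_map_neg_eq hsym (hw i), by simp⟩

lemma wdist_le_of_word {x y : G} {k : ℕ} {w : Fin k → G} (hw : ∀ i, w i ∈ S)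
    (hy : x + ∑ i, w i = y) : wdist S x y ≤ k :=
  Nat.sInf_le ⟨w, hw, hy⟩

lemma exists_word_wdist (hsym : S.map (fun s => -s) = S)
    (hgen : AddSubgroup.closure {s : G | s ∈ S} = ⊤) (x y : G) :
    ∃ w : Fin (wdist S x y) → G, (∀ i, w i ∈ S) ∧ x + ∑ i, w i = y := by
  obtain ⟨k, w, hw, hsum⟩ := exists_word hsym hgen (y - x)
  exact Nat.sInf_mem (s := {k | ∃ w : Fin k → G, (∀ i, w i ∈ S) ∧ x + ∑ i, w i = y})
    ⟨k, w, hw, by rw [hsum, add_sub_cancel]⟩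

lemma wdist_add_sum_le (hsym : S.map (fun s => -s) = S)
    (hgen : AddSubgroup.closure {s : G | s ∈ S} = ⊤) (p x : G) {k : ℕ}
    {w : Fin k → G} (hw : ∀ i, w i ∈ S) :
    wdist S p (x + ∑ i, w i) ≤ wdist S p x + k := by
  obtain ⟨v, hv, hx⟩ := exists_word_wdist hsym hgen p x
  obtain ⟨u, hu, hsum⟩ := exists_append_word hv hw
  exact wdist_le_of_word hu (by rw [hsum, ← add_assoc, hx])

lemma wdist_add_le_succ (hsym : S.map (fun s => -s) = S)
    (hgen : AddSubgroup.closure {s : G | s ∈ S} = ⊤) (p x : G) {s : G} (hs : s ∈ S) :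
    wdist S p (x + s) ≤ wdist S p x + 1 := by
  simpa using wdist_add_sum_le hsym hgen p x (w := fun _ : Fin 1 => s) fun _ => hs

lemma abs_wdist_add_sub_wdist_le (hsym : S.map (fun s => -s) = S)
    (hgen : AddSubgroup.closure {s : G | s ∈ S} = ⊤) (p x : G) {s : G} (hs : s ∈ S) :
    |(wdist S p (x + s) : ℝ) - wdist S p x| ≤ 1 := by
  have h₁ := wdist_add_le_succ hsym hgen p x hs
  have h₂ := wdist_add_le_succ hsym hgen p (x + s) (neg_mem_of_map_neg_eq hsym hs)
  rw [add_neg_cancel_right] at h₂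
  rw [abs_le]
  constructor <;> linarith [(by exact_mod_cast h₁ : (wdist S p (x + s) : ℝ) ≤ wdist S p x + 1),
    (by exact_mod_cast h₂ : (wdist S p x : ℝ) ≤ wdist S p (x + s) + 1)]

lemma wdist_nsmul_le (hsym : S.map (fun s => -s) = S)
    (hgen : AddSubgroup.closure {s : G | s ∈ S} = ⊤) (p y : G) (n : ℕ) :
    wdist S p (n • y) ≤ wdist S p 0 + n * wdist S 0 y := by
  obtain ⟨w, hw, hy⟩ := exists_word_wdist hsym hgen 0 y
  rw [zero_add] at hy
  induction n with
  | zero => simp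
  | succ n ih =>
    have := wdist_add_sum_le hsym hgen p (n • y) hw
    rw [hy, ← succ_nsmul] at this
    rw [add_mul, one_mul, ← add_assoc]
    exact this.trans (by omega)

end WordMetric

section Caccioppoli

lemma sum_multiset_map_sum_comm {ι α : Type*} (S : Multiset ι) (Ω : Finset α) (F : ι → α → ℝ) :
    (S.map fun s => ∑ x ∈ Ω, F s x).sum = ∑ x ∈ Ω, (S.map fun s => F s x).sum :=
  Multiset.sum_map_sum_map S Ω.val

variable {G : Type} [AddCommGroup G] {S : Multiset G}

lemma sum_map_comp_neg {M : Type*} [AddCommMonoid M] (hsym : S.map (fun s => -s) = S)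
    (g : G → M) : (S.map g).sum = (S.map fun s => g (-s)).sum := by
  conv_lhs => rw [← hsym, Multiset.map_map]
  rfl

lemma sum_comp_add_eq_sum {F : G → ℝ} {A Ω : Finset G} {s : G}
    (hF : ∀ x, F x ≠ 0 → x ∈ A) (hA : A ⊆ Ω) (hAs : ∀ x ∈ A, x - s ∈ Ω) :
    ∑ x ∈ Ω, F (x + s) = ∑ x ∈ Ω, F x := by
  have hsupp : ∀ T : Finset G, A ⊆ T → ∑ x ∈ T, F x = ∑ x ∈ A, F x := fun T hT =>
    (sum_subset hT fun x _ hx => not_not.mp (mt (hF x) hx)).symm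
  have hmap : A ⊆ Ω.map (Equiv.addRight s).toEmbedding := fun x hx =>
    mem_map.mpr ⟨x - s, hAs x hx, by simp⟩
  rw [hsupp Ω hA, ← hsupp _ hmap, sum_map]
  rfl

variable {A Ω : Finset G}

/-- Discrete Green formula. The factor `2` appears because `S` is symmetric, so each edge
`{x, x + s}` is counted once for `s` and once for `-s`. -/
lemma sum_fwdDiff_mul_fwdDiff (hsym : S.map (fun s => -s) = S) (hA : A ⊆ Ω)
    (hAS : ∀ x ∈ A, ∀ s ∈ S, x - s ∈ Ω) (v : G → ℝ) {φ : G → ℝ}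
    (hφ : ∀ x, φ x ≠ 0 → x ∈ A) :
    (S.map fun s => ∑ x ∈ Ω, Δ_[s] v x * Δ_[s] φ x).sum = -2 * ∑ x ∈ Ω, φ x * lap S v x := by
  have hs : ∀ s ∈ S, ∑ x ∈ Ω, Δ_[s] v x * Δ_[s] φ x
      = -(∑ x ∈ Ω, Δ_[-s] v x * φ x) - ∑ x ∈ Ω, Δ_[s] v x * φ x := by
    intro s hsS
    have hshift := sum_comp_add_eq_sum (F := fun y => (v y - v (y - s)) * φ y) (s := s)
      (fun y hy => hφ y fun h => hy (by rw [h, mul_zero])) hA fun x hx => hAS x hx s hsS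
    simp only [add_sub_cancel_right] at hshift
    simp only [fwdDiff, mul_sub, sum_sub_distrib, hshift, ← sub_eq_add_neg, ← sum_neg_distrib]
    congr 1
    exact sum_congr rfl fun x _ => by ring
  rw [Multiset.map_congr rfl hs, Multiset.sum_map_sub, Multiset.sum_map_neg,
    ← sum_map_comp_neg hsym (fun s => ∑ x ∈ Ω, Δ_[s] v x * φ x), sum_multiset_map_sum_comm]
  have hlap : ∀ x, (S.map fun s => Δ_[s] v x * φ x).sum = φ x * lap S v x := fun x => by
    rw [Multiset.sum_map_mul_right, mul_comm]
    rfl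
  simp only [hlap]
  ring

lemma abs_mul_mul_sq_sub_sq_le {a u e₁ e₂ ε : ℝ} (h₁ : 0 ≤ e₁) (h₂ : 0 ≤ e₂)
    (h : |e₁ - e₂| ≤ ε) :
    |a * u * (e₁ ^ 2 - e₂ ^ 2)| ≤ (e₁ ^ 2 + e₂ ^ 2) * a ^ 2 / 4 + 2 * ε ^ 2 * u ^ 2 := by
  have hsplit : |a * u * (e₁ ^ 2 - e₂ ^ 2)| = |a| * |u| * (|e₁ - e₂| * (e₁ + e₂)) := by
    rw [show e₁ ^ 2 - e₂ ^ 2 = (e₁ - e₂) * (e₁ + e₂) by ring, abs_mul, abs_mul, abs_mul,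
      abs_of_nonneg (add_nonneg h₁ h₂)]
  rw [hsplit]
  calc |a| * |u| * (|e₁ - e₂| * (e₁ + e₂)) ≤ |a| * |u| * (ε * (e₁ + e₂)) := by gcongr
    _ ≤ (e₁ + e₂) ^ 2 * a ^ 2 / 8 + 2 * ε ^ 2 * u ^ 2 := by
      nlinarith [sq_nonneg ((e₁ + e₂) * |a| / 2 - 2 * ε * |u|), sq_abs a, sq_abs u]
    _ ≤ _ := by nlinarith [sq_nonneg ((e₁ - e₂) * a)]

lemma sum_comp_add_mul_sq_fwdDiff (hsym : S.map (fun s => -s) = S) (hA : A ⊆ Ω)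
    (hAS : ∀ x ∈ A, ∀ s ∈ S, x - s ∈ Ω) (v : G → ℝ) {w : G → ℝ} (hw : ∀ x, w x ≠ 0 → x ∈ A) :
    (S.map fun s => ∑ x ∈ Ω, w (x + s) * Δ_[s] v x ^ 2).sum
      = (S.map fun s => ∑ x ∈ Ω, w x * Δ_[s] v x ^ 2).sum := by
  have hs : ∀ s ∈ S, ∑ x ∈ Ω, w (x + s) * Δ_[s] v x ^ 2 = ∑ x ∈ Ω, w x * Δ_[-s] v x ^ 2 := by
    intro s hsS
    have hshift := sum_comp_add_eq_sum (F := fun y => w y * (v y - v (y - s)) ^ 2) (s := s)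
      (fun y hy => hw y fun h => hy (by rw [h, zero_mul])) hA fun x hx => hAS x hx s hsS
    simp only [add_sub_cancel_right] at hshift
    simp only [fwdDiff, hshift, ← sub_eq_add_neg]
    exact sum_congr rfl fun x _ => by ring
  rw [Multiset.map_congr rfl hs, sum_map_comp_neg hsym]
  simp only [neg_neg]

lemma abs_sum_fwdDiff_mul_mul_sq_sub_sq_le {v η : G → ℝ} (hη₀ : ∀ x, 0 ≤ η x) {ε : ℝ}
    (hlip : ∀ s ∈ S, ∀ x, |η (x + s) - η x| ≤ ε) :
    |(S.map fun s => ∑ x ∈ Ω, Δ_[s] v x * v x * (η (x + s) ^ 2 - η x ^ 2)).sum|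
      ≤ ((S.map fun s => ∑ x ∈ Ω, η (x + s) ^ 2 * Δ_[s] v x ^ 2).sum
          + (S.map fun s => ∑ x ∈ Ω, η x ^ 2 * Δ_[s] v x ^ 2).sum) / 4
        + Multiset.card S * (2 * ε ^ 2 * ∑ x ∈ Ω, v x ^ 2) := by
  have hs : ∀ s ∈ S, |∑ x ∈ Ω, Δ_[s] v x * v x * (η (x + s) ^ 2 - η x ^ 2)|
      ≤ (∑ x ∈ Ω, η (x + s) ^ 2 * Δ_[s] v x ^ 2 + ∑ x ∈ Ω, η x ^ 2 * Δ_[s] v x ^ 2) / 4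
        + 2 * ε ^ 2 * ∑ x ∈ Ω, v x ^ 2 := by
    intro s hs
    refine (abs_sum_le_sum_abs _ _).trans ?_
    rw [← sum_add_distrib, sum_div, mul_sum, ← sum_add_distrib]
    gcongr with x
    refine (abs_mul_mul_sq_sub_sq_le (hη₀ _) (hη₀ _) (hlip s hs x)).trans_eq ?_
    ring
  calc _ ≤ (S.map fun s => |∑ x ∈ Ω, Δ_[s] v x * v x * (η (x + s) ^ 2 - η x ^ 2)|).sum :=
        Multiset.abs_sum_le_sum_abs.trans_eq (by rw [Multiset.map_map]; rfl)
    _ ≤ _ := Multiset.sum_map_le_sum_map _ _ hs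
    _ = _ := by
      simp only [Multiset.sum_map_add, Multiset.sum_map_div, Multiset.map_const',
        Multiset.sum_replicate, nsmul_eq_mul]

/-- Caccioppoli inequality. Green's formula tested against `η² v` gives
`∑ η(x + s)² |∇ₛv|² = -∑ ∇ₛv · v · ∇ₛ(η²)`, and the right side is absorbed by AM-GM. -/
theorem sum_sq_mul_gradSq_le (hsym : S.map (fun s => -s) = S) (hA : A ⊆ Ω)
    (hAS : ∀ x ∈ A, ∀ s ∈ S, x - s ∈ Ω) {v : G → ℝ} (hv : ∀ x, lap S v x = 0)
    {η : G → ℝ} (hη₀ : ∀ x, 0 ≤ η x) (hη : ∀ x, η x ≠ 0 → x ∈ A) {ε : ℝ}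
    (hlip : ∀ s ∈ S, ∀ x, |η (x + s) - η x| ≤ ε) :
    ∑ x ∈ Ω, η x ^ 2 * gradSq S v x ≤ 4 * Multiset.card S * ε ^ 2 * ∑ x ∈ Ω, v x ^ 2 := by
  have hsupp : ∀ x, η x ^ 2 ≠ 0 → x ∈ A := fun x hx => hη x fun h => hx (by rw [h]; ring)
  have hT : ∑ x ∈ Ω, η x ^ 2 * gradSq S v x
      = (S.map fun s => ∑ x ∈ Ω, η x ^ 2 * Δ_[s] v x ^ 2).sum := by
    rw [sum_multiset_map_sum_comm]
    exact sum_congr rfl fun x _ => by rw [gradSq, ← Multiset.sum_map_mul_left]; rfl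
  have hT' := sum_comp_add_mul_sq_fwdDiff hsym hA hAS v hsupp
  have hgreen : (S.map fun s => ∑ x ∈ Ω, η (x + s) ^ 2 * Δ_[s] v x ^ 2).sum
      + (S.map fun s => ∑ x ∈ Ω, Δ_[s] v x * v x * (η (x + s) ^ 2 - η x ^ 2)).sum = 0 := by
    have h := sum_fwdDiff_mul_fwdDiff hsym hA hAS v (φ := fun x => η x ^ 2 * v x)
      fun x hx => hsupp x fun h => hx (by rw [h, zero_mul])
    simp only [hv, mul_zero, sum_const_zero] at h
    rw [← h, ← Multiset.sum_map_add]
    refine congrArg Multiset.sum (Multiset.map_congr rfl fun s _ => ?_)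
    rw [← sum_add_distrib]
    exact sum_congr rfl fun x _ => by simp only [fwdDiff]; ring
  have hE := abs_sum_fwdDiff_mul_mul_sq_sub_sq_le (v := v) (Ω := Ω) hη₀ hlip
  rw [hT]
  linarith [neg_abs_le (S.map fun s => ∑ x ∈ Ω,
    Δ_[s] v x * v x * (η (x + s) ^ 2 - η x ^ 2)).sum]

end Caccioppoli

section Cutoff

variable {G : Type} [AddCommGroup G] {S : Multiset G} {p : G} {R : ℕ}

noncomputable def cutoff (S : Multiset G) (p : G) (R : ℕ) (x : G) : ℝ :=
  max 0 (min 1 (2 - wdist S p x / R))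

lemma cutoff_nonneg (x : G) : 0 ≤ cutoff S p R x := le_max_left _ _

lemma cutoff_eq_one (hR : 1 ≤ R) {x : G} (hx : wdist S p x ≤ R) : cutoff S p R x = 1 := by
  have hdiv : (wdist S p x : ℝ) / R ≤ 1 :=
    (div_le_one (by positivity)).mpr (by exact_mod_cast hx)
  rw [cutoff, min_eq_left (by linarith), max_eq_right zero_le_one]

lemma cutoff_eq_zero (hR : 1 ≤ R) {x : G} (hx : 2 * R < wdist S p x) : cutoff S p R x = 0 := by
  have hdiv : 2 ≤ (wdist S p x : ℝ) / R :=
    (le_div_iff₀ (by positivity)).mpr (by exact_mod_cast hx.le)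
  rw [cutoff, max_eq_left ((min_le_right _ _).trans (by linarith))]

lemma abs_cutoff_add_sub_le (hsym : S.map (fun s => -s) = S)
    (hgen : AddSubgroup.closure {s : G | s ∈ S} = ⊤) (hR : 1 ≤ R) {s : G} (hs : s ∈ S) (x : G) :
    |cutoff S p R (x + s) - cutoff S p R x| ≤ 1 / R := by
  have hRpos : (0 : ℝ) < R := by exact_mod_cast hR
  calc |cutoff S p R (x + s) - cutoff S p R x|
      ≤ |(2 - (wdist S p (x + s) : ℝ) / R) - (2 - (wdist S p x : ℝ) / R)| := by
        refine (abs_max_sub_max_le_max _ _ _ _).trans ?_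
        rw [sub_self, abs_zero, max_eq_right (abs_nonneg _)]
        refine (abs_min_sub_min_le_max _ _ _ _).trans ?_
        rw [sub_self, abs_zero, max_eq_right (abs_nonneg _)]
    _ = |(wdist S p (x + s) : ℝ) - wdist S p x| / R := by
        rw [← abs_of_pos hRpos, ← abs_div, abs_of_pos hRpos, ← abs_neg]
        ring_nf
    _ ≤ 1 / R := by
        gcongr
        exact abs_wdist_add_sub_wdist_le hsym hgen p x hs

end Cutoff

section Harmonic

variable {G : Type} [AddCommGroup G] {S : Multiset G}

lemma fwdDiff_commute (a b : G) : Function.Commute (fwdDiff a : (G → ℝ) → G → ℝ) (fwdDiff b) := by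
  intro f
  funext x
  simp only [fwdDiff, add_right_comm x a b]
  ring

lemma lap_fwdDiff (g : G) (v : G → ℝ) : lap S (Δ_[g] v) = Δ_[g] (lap S v) := by
  funext x
  simp only [lap, fwdDiff, ← Multiset.sum_map_sub, add_right_comm x g]
  exact congrArg Multiset.sum (Multiset.map_congr rfl fun s _ => by ring)

lemma gradSq_nonneg (v : G → ℝ) (x : G) : 0 ≤ gradSq S v x :=
  Multiset.sum_nonneg fun _ hy => by
    obtain ⟨t, _, rfl⟩ := Multiset.mem_map.mp hy
    positivity

lemma sq_fwdDiff_le_gradSq (v : G → ℝ) {s : G} (hs : s ∈ S) (x : G) :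
    Δ_[s] v x ^ 2 ≤ gradSq S v x :=
  Multiset.single_le_sum (fun _ hy => by
    obtain ⟨t, _, rfl⟩ := Multiset.mem_map.mp hy
    positivity) _ (Multiset.mem_map_of_mem (fun s => (v (x + s) - v x) ^ 2) hs)

lemma fwdDiff_eq_zero_of_forall_mem (hgen : AddSubgroup.closure {s : G | s ∈ S} = ⊤)
    {v : G → ℝ} (hv : ∀ s ∈ S, Δ_[s] v = 0) (g : G) : Δ_[g] v = 0 := by
  suffices Function.Periodic v g from funext fun x => sub_eq_zero.mpr (this x)
  induction (hgen ▸ AddSubgroup.mem_top g : g ∈ AddSubgroup.closure {s | s ∈ S})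
    using AddSubgroup.closure_induction with
  | mem s hs => exact fun x => sub_eq_zero.mp (congrFun (hv s hs) x)
  | zero => exact fun x => by rw [add_zero]
  | add a b _ _ ha hb => exact ha.add_period hb
  | neg a _ ha => exact ha.neg

end Harmonic

section Lattice

variable {m : ℕ} {S : Multiset (Fin m → ℤ)} {p : Fin m → ℤ}

def genBound (S : Multiset (Fin m → ℤ)) : ℤ := (S.map fun s => ∑ i, |s i|).sum

lemma genBound_nonneg : 0 ≤ genBound S :=
  Multiset.sum_nonneg fun _ hy => by
    obtain ⟨t, _, rfl⟩ := Multiset.mem_map.mp hy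
    positivity

lemma abs_le_genBound {s : Fin m → ℤ} (hs : s ∈ S) (i : Fin m) : |s i| ≤ genBound S :=
  (single_le_sum (f := fun j => |s j|) (fun _ _ => abs_nonneg _) (mem_univ i)).trans
    (Multiset.single_le_sum (fun _ hy => by
      obtain ⟨t, _, rfl⟩ := Multiset.mem_map.mp hy
      positivity) _ (Multiset.mem_map_of_mem _ hs))

lemma abs_sub_le_genBound_mul_wdist (hsym : S.map (fun s => -s) = S)
    (hgen : AddSubgroup.closure {s : Fin m → ℤ | s ∈ S} = ⊤) (x : Fin m → ℤ) (i : Fin m) :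
    |x i - p i| ≤ genBound S * wdist S p x := by
  obtain ⟨w, hw, hx⟩ := exists_word_wdist hsym hgen p x
  have hxi : x i - p i = ∑ j, w j i := by
    have := congrFun hx i
    simp only [Pi.add_apply, Finset.sum_apply] at this
    linarith
  rw [hxi]
  calc |∑ j, w j i| ≤ ∑ j, |w j i| := abs_sum_le_sum_abs _ _
    _ ≤ ∑ _j : Fin (wdist S p x), genBound S := sum_le_sum fun j _ => abs_le_genBound (hw j) i
    _ = genBound S * wdist S p x := by simp [mul_comm]

noncomputable def wordBall (S : Multiset (Fin m → ℤ)) (p : Fin m → ℤ) (R : ℕ) :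
    Finset (Fin m → ℤ) :=
  (Icc (p - fun _ => genBound S * R) (p + fun _ => genBound S * R)).filter
    fun x => wdist S p x ≤ R

lemma mem_wordBall (hsym : S.map (fun s => -s) = S)
    (hgen : AddSubgroup.closure {s : Fin m → ℤ | s ∈ S} = ⊤) {R : ℕ} {x : Fin m → ℤ} :
    x ∈ wordBall S p R ↔ wdist S p x ≤ R := by
  refine ⟨fun hx => (mem_filter.mp hx).2, fun hx => mem_filter.mpr ⟨?_, hx⟩⟩
  have hbound : ∀ i, |x i - p i| ≤ genBound S * R := fun i =>
    (abs_sub_le_genBound_mul_wdist hsym hgen x i).trans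
      (mul_le_mul_of_nonneg_left (by exact_mod_cast hx) genBound_nonneg)
  rw [mem_Icc]
  constructor <;> intro i <;> simp only [Pi.add_apply, Pi.sub_apply] <;>
    linarith [abs_le.mp (hbound i)]

lemma card_wordBall_le (S : Multiset (Fin m → ℤ)) (p : Fin m → ℤ) (R : ℕ) :
    ((wordBall S p R).card : ℝ) ≤ (2 * genBound S * R + 1 : ℝ) ^ m := by
  have hbox : (Icc (p - fun _ => genBound S * R) (p + fun _ => genBound S * R)).card
      = (2 * genBound S * R + 1).toNat ^ m := by
    simp only [Pi.card_Icc, Pi.add_apply, Pi.sub_apply, Int.card_Icc]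
    rw [Fintype.prod_congr _ (fun _ => (2 * genBound S * R + 1).toNat) fun i => by ring_nf,
      prod_const, card_univ, Fintype.card_fin]
  have hnn : 0 ≤ 2 * genBound S * R + 1 := by have := genBound_nonneg (S := S); positivity
  calc ((wordBall S p R).card : ℝ) ≤ ((2 * genBound S * R + 1).toNat ^ m : ℕ) := by
        exact_mod_cast hbox ▸ card_filter_le _ _
    _ = _ := by
        rw [Nat.cast_pow, ← Int.cast_natCast, Int.toNat_of_nonneg hnn]
        push_cast
        ring

end Lattice

section Growth

variable {m : ℕ} {S : Multiset (Fin m → ℤ)} {p : Fin m → ℤ}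

lemma sum_gradSq_wordBall_le (hsym : S.map (fun s => -s) = S)
    (hgen : AddSubgroup.closure {s : Fin m → ℤ | s ∈ S} = ⊤) {v : (Fin m → ℤ) → ℝ}
    (hv : ∀ x, lap S v x = 0) {R : ℕ} (hR : 1 ≤ R) :
    ∑ x ∈ wordBall S p R, gradSq S v x
      ≤ 4 * Multiset.card S / R ^ 2 * ∑ x ∈ wordBall S p (2 * R + 1), v x ^ 2 := by
  have hball : ∀ {r x}, x ∈ wordBall S p r ↔ wdist S p x ≤ r := mem_wordBall hsym hgen
  have hcacc := sum_sq_mul_gradSq_le hsym (A := wordBall S p (2 * R))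
    (Ω := wordBall S p (2 * R + 1))
    (fun x hx => hball.mpr ((hball.mp hx).trans (by omega)))
    (fun x hx s hs => hball.mpr <| by
      have := wdist_add_le_succ hsym hgen p x (neg_mem_of_map_neg_eq hsym hs)
      rw [← sub_eq_add_neg] at this
      exact this.trans (by have := hball.mp hx; omega))
    hv cutoff_nonneg (fun x hx => hball.mpr (not_lt.mp fun h => hx (cutoff_eq_zero hR h)))
    fun s hs x => abs_cutoff_add_sub_le (p := p) hsym hgen hR hs x
  calc ∑ x ∈ wordBall S p R, gradSq S v x
      = ∑ x ∈ wordBall S p R, cutoff S p R x ^ 2 * gradSq S v x :=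
        sum_congr rfl fun x hx => by rw [cutoff_eq_one hR (hball.mp hx), one_pow, one_mul]
    _ ≤ ∑ x ∈ wordBall S p (2 * R + 1), cutoff S p R x ^ 2 * gradSq S v x :=
        sum_le_sum_of_subset_of_nonneg (fun x hx => hball.mpr ((hball.mp hx).trans (by omega)))
          fun _ _ _ => mul_nonneg (sq_nonneg _) (gradSq_nonneg _ _)
    _ ≤ _ := hcacc
    _ = _ := by ring

lemma rpow_le_mul_rpow_of_le_of_le {R t c : ℝ} (hR : 0 < R) (h₁ : R ≤ t) (h₂ : t ≤ c * R)
    (e : ℝ) : t ^ e ≤ c ^ |e| * R ^ e := by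
  have hc : 1 ≤ c := le_of_mul_le_mul_right (by linarith) hR
  rcases le_or_gt 0 e with he | he
  · calc t ^ e ≤ (c * R) ^ e := Real.rpow_le_rpow (by linarith) h₂ he
      _ = c ^ |e| * R ^ e := by
        rw [abs_of_nonneg he, Real.mul_rpow (by linarith) hR.le]
  · calc t ^ e ≤ R ^ e := Real.rpow_le_rpow_of_nonpos hR h₁ he.le
      _ ≤ c ^ |e| * R ^ e :=
        le_mul_of_one_le_left (by positivity) (Real.one_le_rpow hc (abs_nonneg e))

lemma isBigO_sum_sq_wordBall_of_abs_le (hsym : S.map (fun s => -s) = S)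
    (hgen : AddSubgroup.closure {s : Fin m → ℤ | s ∈ S} = ⊤) {u : (Fin m → ℤ) → ℝ}
    {C d : ℝ} (hd : 0 ≤ d) (hu : ∀ x, |u x| ≤ C * ((wdist S p x : ℝ) + 1) ^ d) :
    (fun R => ∑ x ∈ wordBall S p R, u x ^ 2) =O[atTop] fun R : ℕ => (R : ℝ) ^ (2 * d + m) := by
  refine IsBigO.of_bound ((2 * genBound S + 1) ^ m * C ^ 2 * 4 ^ d) ?_
  filter_upwards [eventually_ge_atTop 1] with R hR
  have hR₀ : (1 : ℝ) ≤ R := by exact_mod_cast hR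
  have hK : (0 : ℝ) ≤ genBound S := by exact_mod_cast genBound_nonneg
  have hpt : ∀ x ∈ wordBall S p R, u x ^ 2 ≤ C ^ 2 * (2 * R) ^ (2 * d) := fun x hx => by
    have hx : (wdist S p x : ℝ) + 1 ≤ 2 * R := by
      have : (wdist S p x : ℝ) ≤ R := by exact_mod_cast (mem_wordBall hsym hgen).mp hx
      linarith
    calc u x ^ 2 = |u x| ^ 2 := (sq_abs _).symm
      _ ≤ (C * ((wdist S p x : ℝ) + 1) ^ d) ^ 2 := pow_le_pow_left₀ (abs_nonneg _) (hu x) 2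
      _ = C ^ 2 * (((wdist S p x : ℝ) + 1) ^ d) ^ 2 := mul_pow _ _ _
      _ ≤ C ^ 2 * ((2 * R) ^ d) ^ 2 := by gcongr
      _ = C ^ 2 * (2 * R) ^ (2 * d) := by
        rw [← Real.rpow_mul_natCast (by positivity), mul_comm d]
        norm_num
  rw [Real.norm_of_nonneg (sum_nonneg fun _ _ => sq_nonneg _),
    Real.norm_of_nonneg (by positivity)]
  calc ∑ x ∈ wordBall S p R, u x ^ 2
      ≤ (wordBall S p R).card * (C ^ 2 * (2 * R) ^ (2 * d)) := by
        simpa using sum_le_card_nsmul _ _ _ hpt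
    _ ≤ ((2 * genBound S + 1) * R) ^ m * (C ^ 2 * (2 * R) ^ (2 * d)) := by
        gcongr
        refine (card_wordBall_le S p R).trans (pow_le_pow_left₀ (by positivity) ?_ m)
        nlinarith
    _ = _ := by
        rw [mul_pow, Real.mul_rpow (by norm_num) (by positivity), Real.rpow_add (by positivity),
          Real.rpow_natCast, Real.rpow_mul (by norm_num)]
        norm_num
        ring

lemma isBigO_sum_sq_wordBall_fwdDiff (hsym : S.map (fun s => -s) = S)
    (hgen : AddSubgroup.closure {s : Fin m → ℤ | s ∈ S} = ⊤) {v : (Fin m → ℤ) → ℝ}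
    (hv : ∀ x, lap S v x = 0) {e : ℝ}
    (h : (fun R => ∑ x ∈ wordBall S p R, v x ^ 2) =O[atTop] fun R : ℕ => (R : ℝ) ^ e)
    {s : Fin m → ℤ} (hs : s ∈ S) :
    (fun R => ∑ x ∈ wordBall S p R, Δ_[s] v x ^ 2) =O[atTop] fun R : ℕ => (R : ℝ) ^ (e - 2) := by
  have hdouble : (fun R : ℕ => ((2 * R + 1 : ℕ) : ℝ) ^ e) =O[atTop] fun R : ℕ => (R : ℝ) ^ e := by
    refine IsBigO.of_bound (3 ^ |e|) ?_
    filter_upwards [eventually_ge_atTop 1] with R hR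
    have hR₀ : (1 : ℝ) ≤ R := by exact_mod_cast hR
    rw [Real.norm_of_nonneg (by positivity), Real.norm_of_nonneg (by positivity)]
    exact rpow_le_mul_rpow_of_le_of_le (by positivity) (by push_cast; linarith)
      (by push_cast; linarith) e
  have hcacc : (fun R => ∑ x ∈ wordBall S p R, Δ_[s] v x ^ 2) =O[atTop]
      fun R : ℕ => (R : ℝ) ^ (-2 : ℝ) * ∑ x ∈ wordBall S p (2 * R + 1), v x ^ 2 := by
    refine IsBigO.of_bound (4 * Multiset.card S) ?_
    filter_upwards [eventually_ge_atTop 1] with R hR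
    rw [Real.norm_of_nonneg (sum_nonneg fun _ _ => sq_nonneg _), Real.norm_of_nonneg
      (mul_nonneg (by positivity) (sum_nonneg fun _ _ => sq_nonneg _))]
    calc ∑ x ∈ wordBall S p R, Δ_[s] v x ^ 2 ≤ ∑ x ∈ wordBall S p R, gradSq S v x :=
          sum_le_sum fun x _ => sq_fwdDiff_le_gradSq v hs x
      _ ≤ _ := sum_gradSq_wordBall_le hsym hgen hv hR
      _ = _ := by rw [Real.rpow_neg (by positivity), Real.rpow_two]; ring
  have htend : Tendsto (fun R : ℕ => 2 * R + 1) atTop atTop :=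
    tendsto_atTop_mono (fun R => show R ≤ 2 * R + 1 by omega) tendsto_id
  refine (hcacc.trans ((isBigO_refl _ _).mul ((h.comp_tendsto htend).trans hdouble)))
    |>.trans_eventuallyEq ?_
  filter_upwards [eventually_ge_atTop 1] with R hR
  rw [← Real.rpow_add (by exact_mod_cast hR)]
  ring_nf

lemma eq_zero_of_isBigO_sum_sq_wordBall (hsym : S.map (fun s => -s) = S)
    (hgen : AddSubgroup.closure {s : Fin m → ℤ | s ∈ S} = ⊤) {v : (Fin m → ℤ) → ℝ} {e : ℝ}
    (h : (fun R => ∑ x ∈ wordBall S p R, v x ^ 2) =O[atTop] fun R : ℕ => (R : ℝ) ^ e)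
    (he : e < 0) : v = 0 := by
  funext x
  have hlim : Tendsto (fun R => ∑ x ∈ wordBall S p R, v x ^ 2) atTop (𝓝 0) :=
    h.trans_tendsto ((tendsto_rpow_neg_atTop (by linarith : 0 < -e)).comp
      tendsto_natCast_atTop_atTop |>.congr fun R => by simp)
  have hle : v x ^ 2 ≤ 0 := ge_of_tendsto hlim <| by
    filter_upwards [eventually_ge_atTop (wdist S p x)] with R hR
    exact single_le_sum (f := fun y => v y ^ 2) (fun _ _ => sq_nonneg _)
      ((mem_wordBall hsym hgen).mpr hR)
  exact pow_eq_zero_iff two_ne_zero |>.mp (le_antisymm hle (sq_nonneg _))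

theorem fwdDiff_iter_eq_zero_of_isBigO (hsym : S.map (fun s => -s) = S)
    (hgen : AddSubgroup.closure {s : Fin m → ℤ | s ∈ S} = ⊤) (k : ℕ) {v : (Fin m → ℤ) → ℝ}
    (hv : ∀ x, lap S v x = 0) {e : ℝ}
    (h : (fun R => ∑ x ∈ wordBall S p R, v x ^ 2) =O[atTop] fun R : ℕ => (R : ℝ) ^ e)
    (he : e < 2 * k) (g : Fin m → ℤ) : (Δ_[g])^[k] v = 0 := by
  induction k generalizing v e with
  | zero => exact eq_zero_of_isBigO_sum_sq_wordBall hsym hgen h (by simpa using he)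
  | succ k ih =>
    rw [Function.iterate_succ_apply']
    refine fwdDiff_eq_zero_of_forall_mem hgen (fun s hs => ?_) g
    rw [(fwdDiff_commute s g).iterate_right k v]
    refine ih (fun x => by simp [lap_fwdDiff, fwdDiff, hv])
      (isBigO_sum_sq_wordBall_fwdDiff hsym hgen hv h hs) ?_
    push_cast at he
    linarith

end Growth

section Polynomial

lemma fwdDiff_iter_comp {M M' E : Type*} [AddCommMonoid M] [AddCommMonoid M'] [AddCommGroup E]
    {φ : M → M'} {h : M} {h' : M'} (hφ : ∀ x, φ (x + h) = φ x + h') (f : M' → E) (n : ℕ) :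
    (Δ_[h])^[n] (f ∘ φ) = ((Δ_[h'])^[n] f) ∘ φ := by
  induction n with
  | zero => rfl
  | succ n ih =>
    funext x
    simp only [Function.iterate_succ_apply', ih, fwdDiff, Function.comp_apply, hφ]

lemma eq_of_fwdDiff_eq {E : Type*} [AddCommGroup E] {f g : ℤ → E} (h : Δ_[1] f = Δ_[1] g)
    (h₀ : f 0 = g 0) : f = g := by
  have hstep : ∀ t, f (t + 1) - g (t + 1) = f t - g t := fun t => by
    have := congrFun h t
    simp only [fwdDiff] at this
    exact sub_eq_sub_iff_sub_eq_sub.mpr this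
  funext t
  rw [← sub_eq_zero]
  induction t using Int.induction_on with
  | zero => rwa [sub_eq_zero]
  | succ t ih => rwa [hstep]
  | pred t ih => rwa [← hstep, sub_add_cancel]

/-- Gregory-Newton interpolation on `ℤ`, valid for negative `t` as well. -/
theorem eq_sum_choose_smul_fwdDiff_iter {E : Type*} [AddCommGroup E] {k : ℕ} {g : ℤ → E}
    (hg : (Δ_[1])^[k] g = 0) (t : ℤ) :
    g t = ∑ j ∈ range k, Ring.choose t j • (Δ_[1])^[j] g 0 := by
  induction k generalizing g t with
  | zero => simpa using congrFun hg t
  | succ k ih =>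
    have hdiff := ih (g := Δ_[1] g) (by rwa [← Function.iterate_succ_apply])
    refine congrFun (eq_of_fwdDiff_eq (g := fun t => ∑ j ∈ range (k + 1),
      Ring.choose t j • (Δ_[1])^[j] g 0) ?_ (by simp [sum_range_succ', Ring.choose_zero_succ])) t
    funext t
    rw [hdiff t]
    simp only [fwdDiff, sum_range_succ' _ k, Ring.choose_succ_succ, Ring.choose_zero_right,
      Function.iterate_succ_apply, add_smul, sum_add_distrib]
    abel

lemma exists_eval_eq_choose (j : ℕ) :
    ∃ Q : Polynomial ℝ, ∀ t : ℤ, Q.eval (t : ℝ) = Ring.choose t j :=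
  ⟨(j.factorial : ℝ)⁻¹ • descPochhammer ℝ j, fun t => by
    rw [← eq_intCast (Int.castRingHom ℝ) (Ring.choose t j), Ring.map_choose, Ring.choose_eq_smul,
      ← Polynomial.aeval_eq_smeval, Polynomial.eval_smul, ← descPochhammer_map (Int.castRingHom ℝ),
      Polynomial.eval_map, Polynomial.aeval_def, algebraMap_int_eq]
    rfl⟩

lemma cons_add_one {m : ℕ} (t : ℤ) (y : Fin m → ℤ) :
    (Fin.cons (t + 1) y : Fin (m + 1) → ℤ) = Fin.cons t y + Pi.single 0 1 := by
  ext j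
  cases j using Fin.cases <;> simp [Fin.succ_ne_zero]

lemma cons_add_single {m : ℕ} (t : ℤ) (y : Fin m → ℤ) (i : Fin m) :
    (Fin.cons t (y + Pi.single i 1) : Fin (m + 1) → ℤ) = Fin.cons t y + Pi.single i.succ 1 := by
  ext j
  cases j using Fin.cases <;> simp [Pi.single_apply, (Fin.succ_ne_zero _).symm]

lemma fwdDiff_iter_zero {M E : Type*} [AddCommMonoid M] [AddCommGroup E] (h : M) (n : ℕ) :
    (Δ_[h])^[n] (0 : M → E) = 0 :=
  Function.iterate_fixed (fwdDiff_const h (0 : E)) n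

lemma eval_aeval_X {σ : Type*} (x : σ → ℝ) (i : σ) (Q : Polynomial ℝ) :
    eval x (Polynomial.aeval (X i) Q) = Q.eval (x i) := by
  induction Q using Polynomial.induction_on <;> simp_all

/-- Expand along the first coordinate by Gregory-Newton: the coefficients are again annihilated
by powers of the coordinate differences, now on `ℤ^(m-1)`. -/
theorem exists_mvPolynomial_of_fwdDiff_iter_eq_zero {m : ℕ} (k : ℕ) {f : (Fin m → ℤ) → ℝ}
    (hf : ∀ i, (Δ_[Pi.single i 1])^[k] f = 0) :
    ∃ P : MvPolynomial (Fin m) ℝ, ∀ x, f x = eval (fun i => (x i : ℝ)) P := by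
  induction m with
  | zero => exact ⟨C (f 0), fun x => by rw [Subsingleton.elim x 0, eval_C]⟩
  | succ m ih =>
    have hcoeff : ∀ j, ∃ P : MvPolynomial (Fin m) ℝ,
        ∀ y, ((Δ_[Pi.single 0 1])^[j] f) (Fin.cons 0 y) = eval (fun i => (y i : ℝ)) P :=
      fun j => ih (f := ((Δ_[Pi.single 0 1])^[j] f) ∘ fun y => Fin.cons 0 y) fun i => by
        rw [fwdDiff_iter_comp (cons_add_single 0 · i),
          ((fwdDiff_commute _ _).iterate_iterate k j) f, hf i.succ, fwdDiff_iter_zero]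
        rfl
    choose P hP using hcoeff
    choose Q hQ using exists_eval_eq_choose
    refine ⟨∑ j ∈ range k, Polynomial.aeval (X 0) (Q j) * rename Fin.succ (P j), fun x => ?_⟩
    have hline : (Δ_[1])^[k] (f ∘ fun t => Fin.cons t (Fin.tail x)) = 0 := by
      rw [fwdDiff_iter_comp (fun t => cons_add_one t _), hf 0]
      rfl
    have hnewton := eq_sum_choose_smul_fwdDiff_iter hline (x 0)
    rw [Function.comp_apply, Fin.cons_self_tail] at hnewton
    rw [hnewton, map_sum]
    refine sum_congr rfl fun j _ => ?_
    rw [fwdDiff_iter_comp (fun t => cons_add_one t (Fin.tail x)), Function.comp_apply, hP, map_mul,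
      eval_rename, eval_aeval_X, hQ, zsmul_eq_mul]
    rfl

end Polynomial

section Degree

lemma eval_smul_of_isHomogeneous {σ R : Type*} [CommSemiring R] {Q : MvPolynomial σ R} {n : ℕ}
    (hQ : Q.IsHomogeneous n) (c : R) (y : σ → R) : eval (c • y) Q = c ^ n * eval y Q := by
  rw [eval_eq, eval_eq, mul_sum]
  refine sum_congr rfl fun μ hμ => ?_
  have hdeg := hQ (mem_support_iff.mp hμ)
  simp only [Finsupp.weight_apply, Pi.one_apply, smul_eq_mul, mul_one, Finsupp.sum] at hdeg
  simp only [Pi.smul_apply, smul_eq_mul, mul_pow, prod_mul_distrib, prod_pow_eq_pow_sum, hdeg]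
  ring

lemma eval_smul_eq_sum {σ R : Type*} [CommSemiring R] (P : MvPolynomial σ R) (c : R)
    (y : σ → R) : eval (c • y) P
      = ∑ i ∈ range (P.totalDegree + 1), c ^ i * eval y (homogeneousComponent i P) := by
  conv_lhs => rw [← sum_homogeneousComponent P]
  rw [map_sum]
  exact sum_congr rfl fun i _ =>
    eval_smul_of_isHomogeneous (homogeneousComponent_isHomogeneous i P) c y

lemma homogeneousComponent_totalDegree_ne_zero {σ R : Type*} [CommSemiring R]
    {P : MvPolynomial σ R} (hP : P ≠ 0) : homogeneousComponent P.totalDegree P ≠ 0 := by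
  obtain ⟨μ, hμ, hdeg⟩ := exists_mem_eq_sup P.support (support_nonempty.mpr hP)
    fun μ => μ.sum fun _ n => n
  intro h
  have hcoeff := coeff_homogeneousComponent P.totalDegree P μ
  rw [h, coeff_zero, if_pos (by rw [totalDegree, hdeg]; rfl)] at hcoeff
  exact mem_support_iff.mp hμ hcoeff.symm

lemma exists_int_eval_ne_zero {σ : Type*} {Q : MvPolynomial σ ℝ} (hQ : Q ≠ 0) :
    ∃ y : σ → ℤ, eval (fun i => (y i : ℝ)) Q ≠ 0 := by
  by_contra! h
  refine hQ (funext_set (fun _ => Set.range ((↑) : ℤ → ℝ))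
    (fun _ => Set.infinite_range_of_injective Int.cast_injective) fun x hx => ?_)
  choose y hy using fun i => hx i (Set.mem_univ i)
  rw [map_zero, ← h y]
  exact congrArg (eval · Q) (funext fun i => (hy i).symm)

lemma natDegree_le_of_abs_eval_le {q : Polynomial ℝ} {C d : ℝ} (hd : 0 ≤ d)
    (h : ∀ n : ℕ, 1 ≤ n → |q.eval (n : ℝ)| ≤ C * (n : ℝ) ^ d) : (q.natDegree : ℝ) ≤ d := by
  by_contra! hlt
  have hq : q ≠ 0 := by rintro rfl; simp at hlt; linarith
  have hratio : Tendsto (fun n : ℕ => q.eval (n : ℝ) / (n : ℝ) ^ q.natDegree) atTop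
      (𝓝 q.leadingCoeff) := by
    have := Polynomial.div_tendsto_atTop_leadingCoeff_div_of_degree_eq (P := q)
      (Q := Polynomial.X ^ q.natDegree) (by rw [Polynomial.degree_X_pow,
        Polynomial.degree_eq_natDegree hq])
    simp only [Polynomial.eval_pow, Polynomial.eval_X, Polynomial.leadingCoeff_X_pow,
      div_one] at this
    exact this.comp tendsto_natCast_atTop_atTop
  have hbound : Tendsto (fun n : ℕ => C * (n : ℝ) ^ (d - q.natDegree)) atTop (𝓝 0) := by
    have := (tendsto_rpow_neg_atTop (by linarith : 0 < -(d - q.natDegree))).comp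
      tendsto_natCast_atTop_atTop
    simpa using this.const_mul C
  have hlc : |q.leadingCoeff| ≤ 0 := le_of_tendsto_of_tendsto hratio.abs hbound <| by
    filter_upwards [eventually_ge_atTop 1] with n hn
    have hpos : (0 : ℝ) < n := by exact_mod_cast hn
    rw [abs_div, abs_of_pos (pow_pos hpos q.natDegree), div_le_iff₀ (by positivity),
      mul_assoc, ← Real.rpow_natCast, ← Real.rpow_add hpos, sub_add_cancel]
    exact h n hn
  exact Polynomial.leadingCoeff_ne_zero.mpr hq (abs_nonpos_iff.mp hlc)

theorem totalDegree_le_of_abs_eval_le {m : ℕ} {S : Multiset (Fin m → ℤ)} {p : Fin m → ℤ}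
    (hsym : S.map (fun s => -s) = S) (hgen : AddSubgroup.closure {s : Fin m → ℤ | s ∈ S} = ⊤)
    {C d : ℝ} (hd : 0 ≤ d) {P : MvPolynomial (Fin m) ℝ}
    (hP : ∀ x : Fin m → ℤ, |eval (fun i => (x i : ℝ)) P| ≤ C * ((wdist S p x : ℝ) + 1) ^ d) :
    (P.totalDegree : ℝ) ≤ d := by
  by_contra! hlt
  have hP₀ : P ≠ 0 := by rintro rfl; simp at hlt; linarith
  have hC : 0 ≤ C := nonneg_of_mul_nonneg_left ((abs_nonneg _).trans (hP 0)) (by positivity)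
  obtain ⟨y, hy⟩ := exists_int_eval_ne_zero (homogeneousComponent_totalDegree_ne_zero hP₀)
  let q : Polynomial ℝ := ∑ i ∈ range (P.totalDegree + 1),
    Polynomial.C (eval (fun j => (y j : ℝ)) (homogeneousComponent i P)) * Polynomial.X ^ i
  have hq_eval : ∀ n : ℕ, q.eval (n : ℝ) = eval (fun j => ((n • y) j : ℝ)) P := fun n => by
    rw [show (fun j => ((n • y) j : ℝ)) = (n : ℝ) • fun j => (y j : ℝ) by ext; simp,
      eval_smul_eq_sum]
    simp only [q, Polynomial.eval_finsetSum, Polynomial.eval_mul, Polynomial.eval_C,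
      Polynomial.eval_pow, Polynomial.eval_X]
    exact sum_congr rfl fun _ _ => mul_comm _ _
  have hq_deg : P.totalDegree ≤ q.natDegree := Polynomial.le_natDegree_of_ne_zero <| by
    simpa [q, Polynomial.finsetSum_coeff, Polynomial.coeff_C_mul_X_pow] using hy
  have hray : ∀ n : ℕ, 1 ≤ n → |q.eval (n : ℝ)|
      ≤ C * ((wdist S p 0 : ℝ) + wdist S 0 y + 1) ^ d * (n : ℝ) ^ d := fun n hn => by
    have hn' : (1 : ℝ) ≤ n := by exact_mod_cast hn
    have hdist : (wdist S p (n • y) : ℝ) ≤ wdist S p 0 + n * wdist S 0 y := by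
      exact_mod_cast wdist_nsmul_le hsym hgen p y n
    rw [hq_eval, mul_assoc, ← Real.mul_rpow (by positivity) (by positivity)]
    exact (hP (n • y)).trans (by gcongr; nlinarith)
  exact hlt.not_ge ((Nat.cast_le.mpr hq_deg).trans (natDegree_le_of_abs_eval_le hd hray))

end Degree

/-- **Heilbronn's theorem, torsion-free case** (Theorem 4.1). On the Cayley graph of
`G ≅ ℤ^m` with any finite symmetric generating set, every polynomial growth harmonic
function of order at most `d` is the restriction to `ℤ^m` of a polynomial on `ℝ^m` of
degree at most `d`: `H^d(G,S) ⊆ P^d(ℤ^m)`. -/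
theorem torsion_free_heilbronn (m : ℕ) (S : Multiset (Fin m → ℤ))
    (hsym : S.map (fun s => -s) = S)
    (hgen : AddSubgroup.closure {s : Fin m → ℤ | s ∈ S} = ⊤)
    (p : Fin m → ℤ) (d : ℝ) (hd : 0 ≤ d) :
    ∀ f ∈ HdSet S p d, ∃ P : MvPolynomial (Fin m) ℝ,
      (P.totalDegree : ℝ) ≤ d ∧
      ∀ x : Fin m → ℤ, f x = MvPolynomial.eval (fun i => (x i : ℝ)) P := by
  rintro f ⟨hharm, C, hgrowth⟩
  have hsq := isBigO_sum_sq_wordBall_of_abs_le hsym hgen hd hgrowth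
  have hdiff : ∀ i : Fin m, (Δ_[Pi.single i 1])^[⌈d⌉₊ + m + 1] f = 0 := fun i =>
    fwdDiff_iter_eq_zero_of_isBigO hsym hgen _ hharm hsq
      (by push_cast; linarith [Nat.le_ceil d]) _
  obtain ⟨P, hP⟩ := exists_mvPolynomial_of_fwdDiff_iter_eq_zero _ hdiff
  exact ⟨P, totalDegree_le_of_abs_eval_le hsym hgen hd fun x => hP x ▸ hgrowth x, hP⟩
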